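/- If G is a closed cover of a space Y that is regular for X × [0,1] (that is, G is locally finite, locally finite dimensional, and every nonempty intersection of its elements is an absolute extensor for X × [0,1]), then any two continuous maps f, g : X → Y that are G-close are G-homotopic: there exists a homotopy H : X × [0,1] → Y from f to g such that for each G in G and each x in X, if both f(x) and g(x) lie in G, then the whole path t ↦ H(x,t) lies in G. -/

import Mathlib

open Set Function

/-- `E ⊆ Z` is an absolute extensor for the space `W`. -/
def IsAE {Z : Type*} [TopologicalSpace Z] (E : Set Z)
    (W : Type*) [TopologicalSpace W] : Prop :=
  ∀ A : Set W, IsClosed A → ∀ f : W → Z, ContinuousOn f A → MapsTo f A E →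
    ∃ g : W → Z, Continuous g ∧ MapsTo g univ E ∧ EqOn g f A

/-- The cover `𝒢` is locally finite dimensional (its nerve is such). -/
def LocFinDim {Y : Type*} (𝒢 : Set (Set Y)) : Prop :=
  ∀ G ∈ 𝒢, ∃ n : ℕ, ∀ B : Set (Set Y), B ⊆ 𝒢 → G ∈ B → (⋂₀ B).Nonempty →
    B.Finite → B.ncard ≤ n

/-!
For a finite family `ℬ ⊆ 𝒢` let `D ℬ = {x | f x, g x ∈ ⋂₀ ℬ}` (`jointPreimage f g ℬ`).
For every such `ℬ` with `D ℬ` nonempty we build `H_ℬ : X × [0,1] → ⋂₀ ℬ`, equal to `f` at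
time `0` and to `g` at time `1` over `D ℬ`, and agreeing on `D ℬ' × [0,1]` with `H_ℬ'` for
every larger such family `ℬ'`. Local finite dimensionality makes strict enlargement of such
families well founded, so `H_ℬ` can be built after all the `H_ℬ'`: local finiteness of `𝒢`
makes the cylinders `D ℬ' × [0,1]` a locally finite closed family, so the prescribed data are
continuous on a closed set, and `⋂₀ ℬ` being an absolute extensor extends them.
The homotopy is `H (x, t) = H_{ℬ x} (x, t)`, where `ℬ x` (`familyAt 𝒢 f g x`) consists of the
members containing `f x` and `g x`; it is continuous because it agrees with `H_ℬ` on each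
cylinder `D ℬ × [0,1]`.
-/

open unitInterval

theorem IsAE.exists_extension_of_locallyFinite {Z W ι : Type*} [TopologicalSpace Z]
    [TopologicalSpace W] {E : Set Z} (hE : IsAE E W) {s : ι → Set W} (hlf : LocallyFinite s)
    (hcl : ∀ i, IsClosed (s i)) {ψ : W → Z} (hcont : ∀ i, ContinuousOn ψ (s i))
    (hmaps : ∀ i, MapsTo ψ (s i) E) :
    ∃ H : W → Z, Continuous H ∧ (∀ w, H w ∈ E) ∧ ∀ i, EqOn H ψ (s i) := by
  obtain ⟨H, hHc, hHE, hHψ⟩ := hE _ (hlf.isClosed_iUnion hcl) ψ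
    (hlf.continuousOn_iUnion hcl hcont) (mapsTo_iUnion.2 hmaps)
  exact ⟨H, hHc, fun w => hHE (mem_univ w), fun i => hHψ.mono (subset_iUnion s i)⟩

section EndpointModification

variable {X Y : Type*}

noncomputable def withEnds (f g : X → Y) (Φ : X × I → Y) (p : X × I) : Y :=
  if p.2 = 0 then f p.1 else if p.2 = 1 then g p.1 else Φ p

@[simp]
theorem withEnds_apply_zero (f g : X → Y) (Φ : X × I → Y) (x : X) :
    withEnds f g Φ (x, 0) = f x := by
  simp [withEnds]

@[simp]
theorem withEnds_apply_one (f g : X → Y) (Φ : X × I → Y) (x : X) :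
    withEnds f g Φ (x, 1) = g x := by
  simp [withEnds]

theorem withEnds_eqOn {f g : X → Y} {Φ K : X × I → Y} {s : Set X} (hΦ : EqOn Φ K (s ×ˢ univ))
    (h₀ : ∀ x ∈ s, K (x, 0) = f x) (h₁ : ∀ x ∈ s, K (x, 1) = g x) :
    EqOn (withEnds f g Φ) K (s ×ˢ univ) := by
  rintro ⟨x, t⟩ ⟨hx, -⟩
  by_cases ht₀ : t = 0
  · simp [ht₀, h₀ x hx]
  by_cases ht₁ : t = 1
  · simp [ht₁, h₁ x hx]
  simpa [withEnds, ht₀, ht₁] using hΦ ⟨hx, mem_univ t⟩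

end EndpointModification

section RelevantFamilies

variable {X Y : Type*} {𝒢 : Set (Set Y)} {f g : X → Y}

def jointPreimage (f g : X → Y) (ℬ : Set (Set Y)) : Set X :=
  f ⁻¹' ⋂₀ ℬ ∩ g ⁻¹' ⋂₀ ℬ

def familyAt (𝒢 : Set (Set Y)) (f g : X → Y) (x : X) : Set (Set Y) :=
  {G ∈ 𝒢 | f x ∈ G ∧ g x ∈ G}

structure IsRelevantFamily (𝒢 : Set (Set Y)) (f g : X → Y) (ℬ : Set (Set Y)) : Prop where
  subset : ℬ ⊆ 𝒢
  nonempty : ℬ.Nonempty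
  finite : ℬ.Finite
  jointPreimage_nonempty : (jointPreimage f g ℬ).Nonempty

def RelevantSSuperset (𝒢 : Set (Set Y)) (f g : X → Y) (ℬ' ℬ : Set (Set Y)) : Prop :=
  IsRelevantFamily 𝒢 f g ℬ' ∧ ℬ ⊂ ℬ'

theorem IsRelevantFamily.sInter_nonempty {ℬ : Set (Set Y)} (h : IsRelevantFamily 𝒢 f g ℬ) :
    (⋂₀ ℬ).Nonempty :=
  let ⟨x, hx⟩ := h.jointPreimage_nonempty
  ⟨f x, hx.1⟩

theorem isClosed_jointPreimage [TopologicalSpace X] [TopologicalSpace Y]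
    (hf : Continuous f) (hg : Continuous g)
    (hclosed : ∀ G ∈ 𝒢, IsClosed G) {ℬ : Set (Set Y)} (hsub : ℬ ⊆ 𝒢) :
    IsClosed (jointPreimage f g ℬ) :=
  have h : IsClosed (⋂₀ ℬ) := isClosed_sInter fun G hG => hclosed G (hsub hG)
  (h.preimage hf).inter (h.preimage hg)

theorem locallyFinite_jointPreimage [TopologicalSpace X] [TopologicalSpace Y]
    (hf : Continuous f) (hlf : LocallyFinite (fun G : 𝒢 => (G : Set Y))) {ι : Type*}
    {p : ι → Set (Set Y)} (hinj : Injective p) (hp : ∀ i, p i ⊆ 𝒢) :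
    LocallyFinite fun i => jointPreimage f g (p i) := by
  intro x
  obtain ⟨V, hV, hfin⟩ := hlf (f x)
  refine ⟨f ⁻¹' V, hf.continuousAt.preimage_mem_nhds hV, ?_⟩
  refine ((hfin.image Subtype.val).finite_subsets.preimage hinj.injOn).subset ?_
  rintro i ⟨y, hy, hyV⟩ G hG
  exact ⟨⟨G, hp i hG⟩, ⟨f y, hy.1 G hG, hyV⟩, rfl⟩

theorem mem_jointPreimage_familyAt (x : X) : x ∈ jointPreimage f g (familyAt 𝒢 f g x) :=
  ⟨fun _ hG => hG.2.1, fun _ hG => hG.2.2⟩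

theorem subset_familyAt {ℬ : Set (Set Y)} {x : X} (hsub : ℬ ⊆ 𝒢)
    (hx : x ∈ jointPreimage f g ℬ) : ℬ ⊆ familyAt 𝒢 f g x :=
  fun G hG => ⟨hsub hG, hx.1 G hG, hx.2 G hG⟩

theorem isRelevantFamily_familyAt [TopologicalSpace Y]
    (hlf : LocallyFinite (fun G : 𝒢 => (G : Set Y))) {x : X}
    (hne : (familyAt 𝒢 f g x).Nonempty) : IsRelevantFamily 𝒢 f g (familyAt 𝒢 f g x) where
  subset := sep_subset _ _
  nonempty := hne
  finite := by
    obtain ⟨V, hV, hfin⟩ := hlf (f x)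
    refine (hfin.image Subtype.val).subset fun G hG => ?_
    exact ⟨⟨G, hG.1⟩, ⟨f x, hG.2.1, mem_of_mem_nhds hV⟩, rfl⟩
  jointPreimage_nonempty := ⟨x, mem_jointPreimage_familyAt x⟩

theorem acc_relevantSSuperset (hlfd : LocFinDim 𝒢) (ℬ : Set (Set Y)) :
    Acc (RelevantSSuperset 𝒢 f g) ℬ := by
  suffices h : ∀ ℬ, IsRelevantFamily 𝒢 f g ℬ → Acc (RelevantSSuperset 𝒢 f g) ℬ from
    Acc.intro ℬ fun ℬ' h' => h ℬ' h'.1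
  intro ℬ hℬ
  obtain ⟨G, hG⟩ := hℬ.nonempty
  obtain ⟨n, hn⟩ := hlfd G (hℬ.subset hG)
  -- relevant families containing `G` have at most `n` members, so `n - ncard` decreases
  suffices h : ∀ k ℬ, IsRelevantFamily 𝒢 f g ℬ → G ∈ ℬ → n - ℬ.ncard = k →
      Acc (RelevantSSuperset 𝒢 f g) ℬ from h _ ℬ hℬ hG rfl
  intro k
  induction k using Nat.strong_induction_on with
  | _ k ih =>
    rintro ℬ - hG rfl
    refine Acc.intro ℬ fun ℬ' ⟨hrel', hss⟩ => ih _ ?_ ℬ' hrel' (hss.subset hG) rfl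
    have hlt := ncard_lt_ncard hss hrel'.finite
    have hle := hn ℬ' hrel'.subset (hss.subset hG) hrel'.sInter_nonempty hrel'.finite
    omega

theorem wellFounded_relevantSSuperset (hlfd : LocFinDim 𝒢) (f g : X → Y) :
    WellFounded (RelevantSSuperset 𝒢 f g) :=
  ⟨acc_relevantSSuperset hlfd⟩

end RelevantFamilies

section PartialHomotopies

variable {X Y : Type*} [TopologicalSpace X] [TopologicalSpace Y] {𝒢 : Set (Set Y)}
  {f g : X → Y}

structure IsPartialHomotopy (𝒢 : Set (Set Y)) (f g : X → Y) (ℬ : Set (Set Y))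
    (prev : ∀ ℬ', RelevantSSuperset 𝒢 f g ℬ' ℬ → X × I → Y) (H : X × I → Y) : Prop where
  continuous : Continuous H
  mem_sInter : ∀ p, H p ∈ ⋂₀ ℬ
  apply_zero : ∀ x ∈ jointPreimage f g ℬ, H (x, 0) = f x
  apply_one : ∀ x ∈ jointPreimage f g ℬ, H (x, 1) = g x
  eqOn_prev : ∀ ℬ' h, EqOn H (prev ℬ' h) (jointPreimage f g ℬ' ×ˢ univ)

open Classical in
noncomputable def partialHomotopy (hlfd : LocFinDim 𝒢) (f g : X → Y) :
    Set (Set Y) → X × I → Y :=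
  (wellFounded_relevantSSuperset hlfd f g).fix fun ℬ prev =>
    if h : ∃ H, IsPartialHomotopy 𝒢 f g ℬ prev H then h.choose else fun p => f p.1

noncomputable def gluedHomotopy (hlfd : LocFinDim 𝒢) (f g : X → Y) (p : X × I) : Y :=
  partialHomotopy hlfd f g (familyAt 𝒢 f g p.1) p

theorem isPartialHomotopy_partialHomotopy_of_exists (hlfd : LocFinDim 𝒢) {ℬ : Set (Set Y)}
    (h : ∃ H, IsPartialHomotopy 𝒢 f g ℬ (fun ℬ' _ => partialHomotopy hlfd f g ℬ') H) :
    IsPartialHomotopy 𝒢 f g ℬ (fun ℬ' _ => partialHomotopy hlfd f g ℬ')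
      (partialHomotopy hlfd f g ℬ) := by
  have e : partialHomotopy hlfd f g ℬ = h.choose := by
    conv_lhs => rw [partialHomotopy, WellFounded.fix_eq]
    exact dif_pos h
  rw [e]
  exact h.choose_spec

theorem partialHomotopy_eqOn_gluedHomotopy (hlf : LocallyFinite (fun G : 𝒢 => (G : Set Y)))
    (hlfd : LocFinDim 𝒢) {ℬ : Set (Set Y)} (hrel : IsRelevantFamily 𝒢 f g ℬ)
    (hℬ : IsPartialHomotopy 𝒢 f g ℬ (fun ℬ' _ => partialHomotopy hlfd f g ℬ')
      (partialHomotopy hlfd f g ℬ)) :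
    EqOn (partialHomotopy hlfd f g ℬ) (gluedHomotopy hlfd f g) (jointPreimage f g ℬ ×ˢ univ) := by
  rintro ⟨x, t⟩ ⟨hx, -⟩
  have hsub : ℬ ⊆ familyAt 𝒢 f g x := subset_familyAt hrel.subset hx
  obtain hss | hB := hsub.ssubset_or_eq
  · exact hℬ.eqOn_prev _ ⟨isRelevantFamily_familyAt hlf (hrel.nonempty.mono hsub), hss⟩
      ⟨mem_jointPreimage_familyAt x, mem_univ t⟩
  · simp only [gluedHomotopy, hB]

theorem exists_isPartialHomotopy (hf : Continuous f) (hg : Continuous g)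
    (hclosed : ∀ G ∈ 𝒢, IsClosed G) (hlf : LocallyFinite (fun G : 𝒢 => (G : Set Y)))
    (hlfd : LocFinDim 𝒢) {ℬ : Set (Set Y)} (hrel : IsRelevantFamily 𝒢 f g ℬ)
    (hAE : IsAE (⋂₀ ℬ) (X × I))
    (ih : ∀ ℬ', RelevantSSuperset 𝒢 f g ℬ' ℬ → IsPartialHomotopy 𝒢 f g ℬ'
      (fun ℬ'' _ => partialHomotopy hlfd f g ℬ'') (partialHomotopy hlfd f g ℬ')) :
    ∃ H, IsPartialHomotopy 𝒢 f g ℬ (fun ℬ' _ => partialHomotopy hlfd f g ℬ') H := by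
  set ψ := withEnds f g (gluedHomotopy hlfd f g)
  have hψ : ∀ ℬ' (h : RelevantSSuperset 𝒢 f g ℬ' ℬ),
      EqOn ψ (partialHomotopy hlfd f g ℬ') (jointPreimage f g ℬ' ×ˢ univ) := fun ℬ' h =>
    withEnds_eqOn (partialHomotopy_eqOn_gluedHomotopy hlf hlfd h.1 (ih ℬ' h)).symm
      (ih ℬ' h).apply_zero (ih ℬ' h).apply_one
  let s : {ℬ' // RelevantSSuperset 𝒢 f g ℬ' ℬ} ⊕ Bool → Set (X × I) :=
    Sum.elim (fun ℬ' => jointPreimage f g ℬ'.1 ×ˢ univ)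
      (fun b => jointPreimage f g ℬ ×ˢ {if b then 1 else 0})
  have hs_lf : LocallyFinite s :=
    ((locallyFinite_jointPreimage hf hlf Subtype.val_injective fun ℬ' => ℬ'.2.1.subset).prod_right
      _).sumElim (locallyFinite_of_finite _)
  have hs_closed : ∀ i, IsClosed (s i) := by
    rintro (ℬ' | b)
    · exact (isClosed_jointPreimage hf hg hclosed ℬ'.2.1.subset).prod isClosed_univ
    · exact (isClosed_jointPreimage hf hg hclosed hrel.subset).prod isClosed_singleton
  have hs_cont : ∀ i, ContinuousOn ψ (s i) := by
    rintro (⟨ℬ', h⟩ | _ | _)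
    · exact (ih ℬ' h).continuous.continuousOn.congr (hψ ℬ' h)
    · refine (hf.comp continuous_fst).continuousOn.congr ?_
      rintro ⟨x, t⟩ ⟨-, rfl⟩
      exact withEnds_apply_zero f g _ x
    · refine (hg.comp continuous_fst).continuousOn.congr ?_
      rintro ⟨x, t⟩ ⟨-, rfl⟩
      exact withEnds_apply_one f g _ x
  have hs_maps : ∀ i, MapsTo ψ (s i) (⋂₀ ℬ) := by
    rintro (⟨ℬ', h⟩ | _ | _)
    · intro p hp
      rw [hψ ℬ' h hp]
      exact sInter_subset_sInter h.2.subset ((ih ℬ' h).mem_sInter p)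
    · rintro ⟨x, t⟩ ⟨hx, rfl⟩
      simpa [ψ] using hx.1
    · rintro ⟨x, t⟩ ⟨hx, rfl⟩
      simpa [ψ] using hx.2
  obtain ⟨H, hHc, hHℬ, hHψ⟩ := hAE.exists_extension_of_locallyFinite hs_lf hs_closed hs_cont hs_maps
  refine ⟨H, hHc, hHℬ, fun x hx => ?_, fun x hx => ?_,
    fun ℬ' h => (hHψ (.inl ⟨ℬ', h⟩)).trans (hψ ℬ' h)⟩
  · simpa [ψ] using @hHψ (.inr false) (x, 0) ⟨hx, rfl⟩
  · simpa [ψ] using @hHψ (.inr true) (x, 1) ⟨hx, rfl⟩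

theorem isPartialHomotopy_partialHomotopy (hf : Continuous f) (hg : Continuous g)
    (hclosed : ∀ G ∈ 𝒢, IsClosed G) (hlf : LocallyFinite (fun G : 𝒢 => (G : Set Y)))
    (hlfd : LocFinDim 𝒢)
    (hAE : ∀ ℬ ⊆ 𝒢, ℬ.Nonempty → (⋂₀ ℬ).Nonempty → IsAE (⋂₀ ℬ) (X × I))
    {ℬ : Set (Set Y)} (hrel : IsRelevantFamily 𝒢 f g ℬ) :
    IsPartialHomotopy 𝒢 f g ℬ (fun ℬ' _ => partialHomotopy hlfd f g ℬ')
      (partialHomotopy hlfd f g ℬ) := by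
  induction ℬ using (wellFounded_relevantSSuperset hlfd f g).induction with
  | _ ℬ ih =>
    exact isPartialHomotopy_partialHomotopy_of_exists hlfd <|
      exists_isPartialHomotopy hf hg hclosed hlf hlfd hrel
        (hAE ℬ hrel.subset hrel.nonempty hrel.sInter_nonempty) fun ℬ' h => ih ℬ' h h.1

theorem continuous_gluedHomotopy (hf : Continuous f) (hg : Continuous g)
    (hclosed : ∀ G ∈ 𝒢, IsClosed G) (hlf : LocallyFinite (fun G : 𝒢 => (G : Set Y)))
    (hlfd : LocFinDim 𝒢)
    (hAE : ∀ ℬ ⊆ 𝒢, ℬ.Nonempty → (⋂₀ ℬ).Nonempty → IsAE (⋂₀ ℬ) (X × I))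
    (hclose : ∀ x, (familyAt 𝒢 f g x).Nonempty) :
    Continuous (gluedHomotopy hlfd f g) := by
  let s : {ℬ // IsRelevantFamily 𝒢 f g ℬ} → Set (X × I) := fun ℬ => jointPreimage f g ℬ.1 ×ˢ univ
  refine LocallyFinite.continuous (f := s)
    ((locallyFinite_jointPreimage hf hlf Subtype.val_injective fun ℬ => ℬ.2.subset).prod_right _)
    ?_ (fun ℬ => (isClosed_jointPreimage hf hg hclosed ℬ.2.subset).prod isClosed_univ) ?_
  · refine eq_univ_of_forall fun p => mem_iUnion.2 ?_
    exact ⟨⟨_, isRelevantFamily_familyAt hlf (hclose p.1)⟩,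
      mem_jointPreimage_familyAt p.1, mem_univ p.2⟩
  · rintro ⟨ℬ, hrel⟩
    have hℬ := isPartialHomotopy_partialHomotopy hf hg hclosed hlf hlfd hAE hrel
    exact hℬ.continuous.continuousOn.congr
      (partialHomotopy_eqOn_gluedHomotopy hlf hlfd hrel hℬ).symm

end PartialHomotopies

theorem stmt8_general {X Y : Type*} [TopologicalSpace X] [TopologicalSpace Y]
    (𝒢 : Set (Set Y)) (hclosed : ∀ G ∈ 𝒢, IsClosed G)
    (hlf : LocallyFinite (fun G : 𝒢 => (G : Set Y)))
    (hlfd : LocFinDim 𝒢)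
    (hAE : ∀ ℬ ⊆ 𝒢, ℬ.Nonempty → (⋂₀ ℬ).Nonempty → IsAE (⋂₀ ℬ) (X × unitInterval))
    (f g : X → Y) (hf : Continuous f) (hg : Continuous g)
    (hclose : ∀ x : X, ∃ G ∈ 𝒢, f x ∈ G ∧ g x ∈ G) :
    ∃ H : X × unitInterval → Y, Continuous H ∧
      (∀ x, H (x, 0) = f x) ∧ (∀ x, H (x, 1) = g x) ∧
      (∀ x, ∃ G ∈ 𝒢, ∀ t, H (x, t) ∈ G) ∧
      (∀ G ∈ 𝒢, ∀ x, f x ∈ G → g x ∈ G → ∀ t, H (x, t) ∈ G) := by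
  have hne : ∀ x, (familyAt 𝒢 f g x).Nonempty := fun x =>
    let ⟨G, hG, hfG, hgG⟩ := hclose x
    ⟨G, hG, hfG, hgG⟩
  have hH : ∀ x, IsPartialHomotopy 𝒢 f g (familyAt 𝒢 f g x)
      (fun ℬ' _ => partialHomotopy hlfd f g ℬ') (partialHomotopy hlfd f g (familyAt 𝒢 f g x)) :=
    fun x => isPartialHomotopy_partialHomotopy hf hg hclosed hlf hlfd hAE
      (isRelevantFamily_familyAt hlf (hne x))
  have hpath : ∀ G ∈ 𝒢, ∀ x, f x ∈ G → g x ∈ G → ∀ t, gluedHomotopy hlfd f g (x, t) ∈ G :=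
    fun G hG x hfG hgG t => (hH x).mem_sInter (x, t) G ⟨hG, hfG, hgG⟩
  refine ⟨gluedHomotopy hlfd f g,
    continuous_gluedHomotopy hf hg hclosed hlf hlfd hAE hne,
    fun x => (hH x).apply_zero x (mem_jointPreimage_familyAt x),
    fun x => (hH x).apply_one x (mem_jointPreimage_familyAt x),
    fun x => ?_, hpath⟩
  obtain ⟨G, hG, hfG, hgG⟩ := hclose x
  exact ⟨G, hG, hpath G hG x hfG hgG⟩

/-- If `𝒢` is a closed cover of `Y` regular for `X × [0,1]`, then any two `𝒢`-close
continuous maps `f, g : X → Y` are `𝒢`-homotopic, by a homotopy whose path at `x` lies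
in any member of `𝒢` containing both `f x` and `g x`. -/
theorem stmt8 {X Y : Type*} [TopologicalSpace X] [TopologicalSpace Y]
    (𝒢 : Set (Set Y)) (hcov : ⋃₀ 𝒢 = univ) (hclosed : ∀ G ∈ 𝒢, IsClosed G)
    (hlf : LocallyFinite (fun G : 𝒢 => (G : Set Y)))
    (hlfd : LocFinDim 𝒢)
    (hAE : ∀ ℬ ⊆ 𝒢, ℬ.Nonempty → (⋂₀ ℬ).Nonempty → IsAE (⋂₀ ℬ) (X × unitInterval))
    (f g : X → Y) (hf : Continuous f) (hg : Continuous g)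
    (hclose : ∀ x : X, ∃ G ∈ 𝒢, f x ∈ G ∧ g x ∈ G) :
    ∃ H : X × unitInterval → Y, Continuous H ∧
      (∀ x, H (x, 0) = f x) ∧ (∀ x, H (x, 1) = g x) ∧
      (∀ x, ∃ G ∈ 𝒢, ∀ t, H (x, t) ∈ G) ∧
      (∀ G ∈ 𝒢, ∀ x, f x ∈ G → g x ∈ G → ∀ t, H (x, t) ∈ G) :=
  stmt8_general 𝒢 hclosed hlf hlfd hAE f g hf hg hclose
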